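/- For v ∈ (0, 1/2), the multi-valued Kasner map realizes sensitivity to initial conditions with sensitivity constant δ = |𝐀|/3: there exists δ > 0 such that for every point p on the Kasner circle and every open neighborhood U of p, there exist q ∈ U \ {p}, n ∈ ℕ, and symbol sequences ω, ω* ∈ Σ with d(K_ω^n(p), K_{ω*}^n(q)) ≥ δ. -/

import Mathlib

open Real

/-- The arc `Aα` on the circle (in angular coordinates): `A₁ = {φ : cos φ ≥ v}` and its
rotations by `±2π/3`. -/
def kasnerArc (v : ℝ) : Fin 3 → Set ℝ
  | 0 => {φ : ℝ | Real.cos φ ≥ v}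
  | 1 => {φ : ℝ | Real.cos (φ - 2*π/3) ≥ v}
  | 2 => {φ : ℝ | Real.cos (φ + 2*π/3) ≥ v}

/-- The Kasner arc map `Kα` in angular coordinates. -/
noncomputable def kasnerArcMap (v : ℝ) : Fin 3 → ℝ → ℝ
  | 0 => fun φ => π - 2 * Real.arctan ((1 + v) / (1 - v) * Real.tan (φ / 2))
  | 1 => fun φ => (π - 2 * Real.arctan ((1 + v) / (1 - v) * Real.tan ((φ - 2*π/3) / 2))) + 2*π/3
  | 2 => fun φ => (π - 2 * Real.arctan ((1 + v) / (1 - v) * Real.tan ((φ + 2*π/3) / 2))) - 2*π/3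

/-- A symbol `(μ, ν, ζ)` selecting, on each of the three overlaps `A₁∩A₂`, `A₂∩A₃`, `A₁∩A₃`,
which of the two available arc maps to apply: `μ` selects `K₁`/`K₂`, `ν` selects `K₂`/`K₃`,
`ζ` selects `K₁`/`K₃` (`true` = the first option). -/
abbrev KasnerSymbol := Bool × Bool × Bool

open Classical in
/-- The selection `K_{μνζ}` of the multi-valued Kasner map determined by a symbol. -/
noncomputable def kasnerSelect (v : ℝ) (s : KasnerSymbol) (p : ℝ) : ℝ :=
  if p ∈ kasnerArc v 0 ∩ kasnerArc v 1 then kasnerArcMap v (if s.1 then 0 else 1) p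
  else if p ∈ kasnerArc v 1 ∩ kasnerArc v 2 then kasnerArcMap v (if s.2.1 then 1 else 2) p
  else if p ∈ kasnerArc v 0 ∩ kasnerArc v 2 then kasnerArcMap v (if s.2.2 then 0 else 2) p
  else if p ∈ kasnerArc v 0 then kasnerArcMap v 0 p
  else if p ∈ kasnerArc v 1 then kasnerArcMap v 1 p
  else kasnerArcMap v 2 p

/-- Iterates `K_ω^n` of the multi-valued Kasner map along a symbol sequence `ω`. -/
noncomputable def kasnerIter (v : ℝ) (ω : ℕ → KasnerSymbol) : ℕ → ℝ → ℝ
  | 0 => id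
  | n + 1 => kasnerSelect v (ω n) ∘ kasnerIter v ω n


/-! Up to a rotation by a multiple of `2π/3`, every point lies in the sector `|φ| ≤ π/3`, which
`v < 1/2` puts inside the arc `A₁`. There `K₁ φ = π - 2 arctan (c tan (φ/2))` with
`c = (1+v)/(1-v) ∈ (1, 3)` is decreasing and `|K₁'| ≥ λ > 1`. Two points closer than `δ` either lie
in one sector, and one step multiplies their distance by a factor in `[λ, c]`, or straddle a
sector boundary, and the two adjacent arc maps throw them at least `δ` apart: the endpoints
`±arccos v` of `A₁` are fixed by `K₁` and `K₁` is expanding on `A₁`. So the distance of `p` and a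
nearby `q` reaches `δ` after finitely many steps. -/

noncomputable def kasnerBaseMap (c t : ℝ) : ℝ := π - 2 * arctan (c * tan (t / 2))

theorem kasnerBaseMap_periodic (c : ℝ) : Function.Periodic (kasnerBaseMap c) (2 * π) := by
  intro t
  rw [kasnerBaseMap, kasnerBaseMap, show (t + 2 * π) / 2 = t / 2 + π by ring, tan_periodic]

@[simp]
theorem kasnerBaseMap_zero (c : ℝ) : kasnerBaseMap c 0 = π := by simp [kasnerBaseMap]

theorem kasnerBaseMap_neg (c t : ℝ) : kasnerBaseMap c (-t) = 2 * π - kasnerBaseMap c t := by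
  rw [kasnerBaseMap, kasnerBaseMap, neg_div, tan_neg, mul_neg, arctan_neg]
  ring

theorem kasnerBaseMap_antitoneOn {c : ℝ} (hc : 0 ≤ c) :
    AntitoneOn (kasnerBaseMap c) (Set.Ioo (-π) π) := by
  intro x hx y hy hxy
  have htan : tan (x / 2) ≤ tan (y / 2) :=
    strictMonoOn_tan.monotoneOn ⟨by linarith [hx.1], by linarith [hx.2]⟩
      ⟨by linarith [hy.1], by linarith [hy.2]⟩ (by linarith)
  have := arctan_strictMono.monotone (mul_le_mul_of_nonneg_left htan hc)
  simp only [kasnerBaseMap]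
  linarith

theorem hasDerivAt_kasnerBaseMap (c : ℝ) {t : ℝ} (ht : t ∈ Set.Ioo (-π) π) :
    HasDerivAt (kasnerBaseMap c) (-(c / (1 + (c ^ 2 - 1) * sin (t / 2) ^ 2))) t := by
  have hcos : 0 < cos (t / 2) := cos_pos_of_mem_Ioo ⟨by linarith [ht.1], by linarith [ht.2]⟩
  have h := ((((hasDerivAt_tan hcos.ne').comp t ((hasDerivAt_id t).div_const 2)).const_mul
    c).arctan.const_mul 2).const_sub π
  refine h.congr_deriv ?_
  rw [show 1 + (c ^ 2 - 1) * sin (t / 2) ^ 2 = cos (t / 2) ^ 2 + c ^ 2 * sin (t / 2) ^ 2 by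
    linear_combination -sin_sq_add_cos_sq (t / 2)]
  simp only [Function.comp_apply, id, tan_eq_sin_div_cos]
  field_simp

theorem mul_sub_le_kasnerBaseMap_sub {c s x y : ℝ} (hc : 1 ≤ c) (hxy : x ≤ y) (hx : -π < x)
    (hy : y < π) (hs : ∀ t ∈ Set.Icc x y, sin (t / 2) ^ 2 ≤ s) :
    c / (1 + (c ^ 2 - 1) * s) * (y - x) ≤ kasnerBaseMap c x - kasnerBaseMap c y := by
  have hderiv : ∀ t ∈ Set.Icc x y, HasDerivAt (kasnerBaseMap c)
      (-(c / (1 + (c ^ 2 - 1) * sin (t / 2) ^ 2))) t := fun t ht =>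
    hasDerivAt_kasnerBaseMap c ⟨hx.trans_le ht.1, ht.2.trans_lt hy⟩
  have key := (convex_Icc x y).image_sub_le_mul_sub_of_deriv_le
    (fun t ht => (hderiv t ht).continuousAt.continuousWithinAt)
    (fun t ht => (hderiv t (interior_subset ht)).differentiableAt.differentiableWithinAt)
    (C := -(c / (1 + (c ^ 2 - 1) * s))) (fun t ht => by
      have ht' := interior_subset ht
      rw [(hderiv t ht').deriv, neg_le_neg_iff]
      have hc2 : 0 ≤ c ^ 2 - 1 := by nlinarith
      exact div_le_div_of_nonneg_left (by linarith) (by positivity)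
        (by gcongr; exact hs t ht'))
    x (Set.left_mem_Icc.2 hxy) y (Set.right_mem_Icc.2 hxy) hxy
  linarith

theorem kasnerBaseMap_sub_le_mul_sub {c x y : ℝ} (hc : 1 ≤ c) (hxy : x ≤ y) (hx : -π < x)
    (hy : y < π) : kasnerBaseMap c x - kasnerBaseMap c y ≤ c * (y - x) := by
  have hderiv : ∀ t ∈ Set.Icc x y, HasDerivAt (kasnerBaseMap c)
      (-(c / (1 + (c ^ 2 - 1) * sin (t / 2) ^ 2))) t := fun t ht =>
    hasDerivAt_kasnerBaseMap c ⟨hx.trans_le ht.1, ht.2.trans_lt hy⟩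
  have key := (convex_Icc x y).mul_sub_le_image_sub_of_le_deriv
    (fun t ht => (hderiv t ht).continuousAt.continuousWithinAt)
    (fun t ht => (hderiv t (interior_subset ht)).differentiableAt.differentiableWithinAt)
    (C := -c) (fun t ht => by
      rw [(hderiv t (interior_subset ht)).deriv, neg_le_neg_iff]
      have hc2 : 0 ≤ c ^ 2 - 1 := by nlinarith
      exact div_le_self (by linarith) (le_add_of_nonneg_right (by positivity)))
    x (Set.left_mem_Icc.2 hxy) y (Set.right_mem_Icc.2 hxy) hxy
  linarith

noncomputable def kasnerSlope (v : ℝ) : ℝ := (1 + v) / (1 - v)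

theorem kasnerBaseMap_arccos {v : ℝ} (hv : v ∈ Set.Ioo (-1) 1) :
    kasnerBaseMap (kasnerSlope v) (arccos v) = arccos v := by
  obtain ⟨hv₁, hv₂⟩ := hv
  set a := arccos v
  have ha₀ : 0 < a := arccos_pos.2 hv₂
  have haπ : a < π := arccos_lt_pi.2 hv₁
  have hcos : cos a = v := cos_arccos hv₁.le hv₂.le
  have hc2 : 0 < cos (a / 2) := cos_pos_of_mem_Ioo ⟨by linarith, by linarith⟩
  have hs2 : 0 < sin (a / 2) := sin_pos_of_pos_of_lt_pi (by linarith) (by linarith)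
  have htan : 0 < tan (a / 2) := by rw [tan_eq_sin_div_cos]; positivity
  have hcot : kasnerSlope v * tan (a / 2) = (tan (a / 2))⁻¹ := by
    have hcos_sq : cos (a / 2) ^ 2 = (1 + v) / 2 := by
      rw [cos_sq, show 2 * (a / 2) = a by ring, hcos]; ring
    have hsin_sq : sin (a / 2) ^ 2 = (1 - v) / 2 := by
      rw [sin_sq_eq_half_sub, show 2 * (a / 2) = a by ring, hcos]; ring
    rw [kasnerSlope, tan_eq_sin_div_cos, inv_div, div_mul_div_comm,
      div_eq_div_iff (by positivity) (by positivity)]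
    have h1v : (1 - v) ≠ 0 := by linarith
    field_simp
    linear_combination (1 + v) * hsin_sq - (1 - v) * hcos_sq
  rw [kasnerBaseMap, hcot, arctan_inv_of_pos htan, arctan_tan (by linarith) (by linarith)]
  ring

theorem two_mul_arccos_sub_le_kasnerBaseMap {v t : ℝ} (hv : v ∈ Set.Ico 0 1) (ht : 0 ≤ t)
    (hta : t ≤ arccos v) : 2 * arccos v - t ≤ kasnerBaseMap (kasnerSlope v) t := by
  obtain ⟨hv₀, hv₁⟩ := hv
  set a := arccos v
  have haπ : a ≤ π / 2 := arccos_le_pi_div_two.2 hv₀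
  have hslope : 1 ≤ kasnerSlope v := by rw [kasnerSlope, le_div_iff₀ (by linarith)]; linarith
  have hsin_sq : sin (a / 2) ^ 2 = (1 - v) / 2 := by
    rw [sin_sq_eq_half_sub, show 2 * (a / 2) = a by ring, cos_arccos (by linarith) hv₁.le]; ring
  have hunit : kasnerSlope v / (1 + (kasnerSlope v ^ 2 - 1) * sin (a / 2) ^ 2) = 1 := by
    have hden : 1 + (kasnerSlope v ^ 2 - 1) * ((1 - v) / 2) = kasnerSlope v := by
      have h1v : (1 - v) ≠ 0 := by linarith
      rw [kasnerSlope]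
      field_simp
      ring
    rw [hsin_sq, hden, div_self (by linarith)]
  have hexp := mul_sub_le_kasnerBaseMap_sub hslope hta (by linarith [pi_pos]) (by linarith [pi_pos])
    (s := sin (a / 2) ^ 2) fun t' ht' => by
      have h0 : 0 ≤ sin (t' / 2) := sin_nonneg_of_nonneg_of_le_pi (by linarith [ht'.1])
        (by linarith [ht'.2])
      gcongr
      exact sin_le_sin_of_le_of_le_pi_div_two (by linarith [ht'.1, pi_pos]) (by linarith)
        (by linarith [ht'.2])
  rw [hunit, one_mul, kasnerBaseMap_arccos ⟨by linarith, hv₁⟩] at hexp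
  linarith

theorem le_norm_coe_angle {d r : ℝ} (hd : 0 ≤ d) (hdr : d ≤ r) (hrd : r ≤ 2 * π - d) :
    d ≤ ‖(r : Real.Angle)‖ := by
  have hnorm : ∀ x : ℝ, |x| ≤ π → ‖(x : Real.Angle)‖ = |x| := fun x hx =>
    (AddCircle.norm_coe_eq_abs_iff _ two_pi_pos.ne').2 (by
      rw [abs_of_pos two_pi_pos]; linarith)
  rcases le_total r π with h | h
  · rw [hnorm r (abs_le.2 ⟨by linarith [pi_pos], h⟩), abs_of_nonneg (by linarith)]
    exact hdr
  · have hshift : (r : Real.Angle) = (r - 2 * π : ℝ) := by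
      rw [Real.Angle.coe_sub, Real.Angle.coe_two_pi, sub_zero]
    rw [hshift, hnorm _ (abs_le.2 ⟨by linarith, by linarith [pi_pos]⟩),
      abs_of_nonpos (by linarith)]
    linarith

theorem one_half_le_cos {t : ℝ} (ht : |t| ≤ π / 3) : 1 / 2 ≤ cos t := by
  rw [← cos_pi_div_three, ← cos_abs t]
  exact cos_le_cos_of_nonneg_of_le_pi (abs_nonneg t) (by linarith [pi_pos]) ht

noncomputable def kasnerCenter : Fin 3 → ℝ
  | 0 => 0
  | 1 => 2 * π / 3
  | 2 => -(2 * π / 3)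

theorem kasnerArcMap_eq (v : ℝ) (i : Fin 3) (φ : ℝ) :
    kasnerArcMap v i φ = kasnerBaseMap (kasnerSlope v) (φ - kasnerCenter i) + kasnerCenter i := by
  fin_cases i <;> simp [kasnerArcMap, kasnerCenter, kasnerBaseMap, kasnerSlope]; ring

theorem mem_kasnerArc_iff {v φ : ℝ} {i : Fin 3} :
    φ ∈ kasnerArc v i ↔ v ≤ cos (φ - kasnerCenter i) := by
  fin_cases i <;> simp [kasnerArc, kasnerCenter, sub_neg_eq_add]

theorem not_mem_kasnerArc_two {v φ : ℝ} (hv : 0 < v) (h₀ : φ ∈ kasnerArc v 0)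
    (h₁ : φ ∈ kasnerArc v 1) : φ ∉ kasnerArc v 2 := by
  intro h₂
  simp only [kasnerArc, Set.mem_ofPred_eq] at h₀ h₁ h₂
  have hsum : cos φ + cos (φ - 2 * π / 3) + cos (φ + 2 * π / 3) = 0 := by
    rw [cos_sub, cos_add, show 2 * π / 3 = π - π / 3 by ring, cos_pi_sub, cos_pi_div_three]
    ring
  linarith

theorem exists_kasnerSelect_eq {v φ : ℝ} (hv : 0 < v) {i : Fin 3} (hφ : φ ∈ kasnerArc v i) :
    ∃ s, kasnerSelect v s φ = kasnerArcMap v i φ := by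
  fin_cases i
  · exact ⟨(true, true, true), by unfold kasnerSelect; split_ifs <;> simp_all⟩
  · exact ⟨(false, true, true), by unfold kasnerSelect; split_ifs <;> simp_all⟩
  · refine ⟨(true, false, false), ?_⟩
    have := not_mem_kasnerArc_two hv (φ := φ)
    unfold kasnerSelect; split_ifs <;> simp_all

theorem exists_kasnerCenter_eq (k : ℤ) :
    ∃ (i : Fin 3) (j : ℤ), 2 * π / 3 * k = kasnerCenter i + j * (2 * π) := by
  obtain ⟨q, hq⟩ : ∃ q : ℤ, k = 3 * q ∨ k = 3 * q + 1 ∨ k = 3 * q + 2 := ⟨k / 3, by omega⟩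
  rcases hq with rfl | rfl | rfl
  · exact ⟨0, q, by simp only [kasnerCenter]; push_cast; ring⟩
  · exact ⟨1, q, by simp only [kasnerCenter]; push_cast; ring⟩
  · exact ⟨2, q + 1, by simp only [kasnerCenter]; push_cast; ring⟩

theorem exists_kasnerSelect_eq_of_abs_sub_le {v : ℝ} (hv : v ∈ Set.Ioc 0 (1 / 2)) (k : ℤ) :
    ∃ j : ℤ, ∀ φ, |φ - 2 * π / 3 * k| ≤ π / 3 → ∃ s, kasnerSelect v s φ =
      kasnerBaseMap (kasnerSlope v) (φ - 2 * π / 3 * k) + 2 * π / 3 * k - j * (2 * π) := by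
  obtain ⟨i, j, hk⟩ := exists_kasnerCenter_eq k
  refine ⟨j, fun φ hφ => ?_⟩
  have hshift : φ - kasnerCenter i = φ - 2 * π / 3 * k + j * (2 * π) := by rw [hk]; ring
  have hmem : φ ∈ kasnerArc v i := by
    rw [mem_kasnerArc_iff, hshift, cos_periodic.int_mul j]
    linarith [one_half_le_cos hφ, hv.2]
  obtain ⟨s, hs⟩ := exists_kasnerSelect_eq hv.1 hmem
  refine ⟨s, ?_⟩
  rw [hs, kasnerArcMap_eq, hshift, (kasnerBaseMap_periodic _).int_mul j, hk]
  ring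

noncomputable def kasnerDelta (v : ℝ) : ℝ := 2 * arccos v - 2 * π / 3

-- The minimum of `|K₁'|` over the sector `[-π/3, π/3]`, where `sin² (t/2) ≤ 1/4`.
noncomputable def kasnerRate (v : ℝ) : ℝ := kasnerSlope v / (1 + (kasnerSlope v ^ 2 - 1) / 4)

theorem kasnerDelta_pos {v : ℝ} (hv₁ : -1 ≤ v) (hv₂ : v < 1 / 2) : 0 < kasnerDelta v := by
  have h : arccos (1 / 2) = π / 3 :=
    arccos_eq_of_eq_cos (by positivity) (by linarith [pi_pos]) cos_pi_div_three.symm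
  have := arccos_lt_arccos hv₁ hv₂ (by norm_num)
  rw [kasnerDelta]
  linarith

theorem kasnerDelta_lt {v : ℝ} (hv : 0 < v) : kasnerDelta v < π / 3 := by
  have := arccos_lt_pi_div_two.2 hv
  rw [kasnerDelta]
  linarith

theorem kasnerSlope_mem_Ioo {v : ℝ} (hv : v ∈ Set.Ioo 0 (1 / 2)) :
    kasnerSlope v ∈ Set.Ioo 1 3 := by
  obtain ⟨hv₀, hv₁⟩ := hv
  rw [kasnerSlope, Set.mem_Ioo, lt_div_iff₀ (by linarith), div_lt_iff₀ (by linarith)]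
  constructor <;> linarith

theorem one_lt_kasnerRate {v : ℝ} (hv : v ∈ Set.Ioo 0 (1 / 2)) : 1 < kasnerRate v := by
  obtain ⟨hc₁, hc₃⟩ := kasnerSlope_mem_Ioo hv
  rw [kasnerRate, lt_div_iff₀ (by nlinarith)]
  nlinarith

-- `u` and `w + 2π/3` lie on either side of the common boundary `π/3` of the sectors centred at
-- `0` and `2π/3`; modulo `2π`, their images under `K₁` and `K₂` differ by minus this quantity.
theorem kasnerBaseMap_sub_add_mem_Icc {v u w : ℝ} (hv : v ∈ Set.Ioo 0 (1 / 2))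
    (hu : u ∈ Set.Icc 0 (π / 3)) (hw : w ∈ Set.Icc (-(π / 3)) 0) :
    kasnerBaseMap (kasnerSlope v) w - kasnerBaseMap (kasnerSlope v) u + 2 * π / 3 ∈
      Set.Icc (kasnerDelta v) (2 * π - kasnerDelta v) := by
  have hπ := pi_pos
  have hδ₀ := kasnerDelta_pos (by linarith [hv.1]) hv.2
  have hδ := kasnerDelta_lt hv.1
  rw [kasnerDelta] at hδ₀ hδ ⊢
  have hanti := kasnerBaseMap_antitoneOn (zero_le_one.trans (kasnerSlope_mem_Ioo hv).1.le)
  have hmem : ∀ t, |t| ≤ π / 3 → t ∈ Set.Ioo (-π) π := fun t ht =>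
    ⟨by linarith [neg_abs_le t], by linarith [le_abs_self t]⟩
  have h0 := hmem 0 (by simp; positivity)
  have hπ3 := hmem (π / 3) (by rw [abs_of_pos (by positivity)])
  have hπ3' := hmem (-(π / 3)) (by rw [abs_neg, abs_of_pos (by positivity)])
  have hu' := hmem u (abs_le.2 ⟨by linarith [hu.1], hu.2⟩)
  have hw' := hmem w (abs_le.2 ⟨hw.1, by linarith [hw.2]⟩)
  have hu₀ := hanti h0 hu' hu.1
  have hu₁ := hanti hu' hπ3 hu.2
  have hw₀ := hanti hw' h0 hw.2
  have hw₁ := hanti hπ3' hw' hw.1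
  have hfar := two_mul_arccos_sub_le_kasnerBaseMap ⟨hv.1.le, by linarith [hv.2]⟩
    (by positivity : 0 ≤ π / 3) (by linarith)
  rw [kasnerBaseMap_zero] at hu₀ hw₀
  rw [kasnerBaseMap_neg] at hw₁
  constructor <;> linarith

theorem kasnerBaseMap_sub_mem_Icc_of_sector {v u w : ℝ} (hv : v ∈ Set.Ioo 0 (1 / 2))
    (hu : -(π / 3) ≤ u) (huw : u ≤ w) (hw : w ≤ π / 3) :
    kasnerBaseMap (kasnerSlope v) u - kasnerBaseMap (kasnerSlope v) w ∈
      Set.Icc (kasnerRate v * (w - u)) (3 * (w - u)) := by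
  have hπ := pi_pos
  have hc := kasnerSlope_mem_Ioo hv
  have hlow := mul_sub_le_kasnerBaseMap_sub hc.1.le huw (by linarith) (by linarith)
    (s := 1 / 4) fun t ht => by
      have := one_half_le_cos (t := t) (abs_le.2 ⟨by linarith [ht.1], by linarith [ht.2]⟩)
      rw [sin_sq_eq_half_sub, show 2 * (t / 2) = t by ring]
      linarith
  have hup := kasnerBaseMap_sub_le_mul_sub hc.1.le huw (by linarith) (by linarith)
  have hup₃ : kasnerSlope v * (w - u) ≤ 3 * (w - u) :=
    mul_le_mul_of_nonneg_right hc.2.le (by linarith)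
  rw [show kasnerRate v = kasnerSlope v / (1 + (kasnerSlope v ^ 2 - 1) * (1 / 4)) by
    rw [kasnerRate]; ring]
  exact ⟨hlow, hup.trans hup₃⟩

theorem exists_kasnerSelect_far_or_expanding {v x y : ℝ} (hv : v ∈ Set.Ioo 0 (1 / 2))
    (hxy : x < y) (hyx : y - x < kasnerDelta v) :
    ∃ s s' : KasnerSymbol,
      kasnerDelta v ≤ ‖(kasnerSelect v s x : Real.Angle) - kasnerSelect v s' y‖ ∨
      (kasnerRate v * (y - x) ≤ kasnerSelect v s x - kasnerSelect v s' y ∧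
        kasnerSelect v s x - kasnerSelect v s' y < kasnerDelta v) := by
  have hπ := pi_pos
  have hδ₀ := kasnerDelta_pos (by linarith [hv.1]) hv.2
  have hδ := kasnerDelta_lt hv.1
  obtain ⟨k, hxk⟩ : ∃ k : ℤ, 2 * π / 3 * k - π / 3 ≤ x ∧ x < 2 * π / 3 * k + π / 3 := by
    obtain ⟨k, ⟨h₁, h₂⟩, -⟩ := existsUnique_zsmul_near_of_pos (by positivity : 0 < 2 * π / 3)
      (x + π / 3)
    rw [zsmul_eq_mul] at h₁ h₂
    push_cast at h₂
    exact ⟨k, by linarith, by linarith⟩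
  obtain ⟨j, hj⟩ := exists_kasnerSelect_eq_of_abs_sub_le ⟨hv.1, hv.2.le⟩ k
  obtain ⟨j', hj'⟩ := exists_kasnerSelect_eq_of_abs_sub_le ⟨hv.1, hv.2.le⟩ (k + 1)
  rw [show 2 * π / 3 * ((k + 1 : ℤ) : ℝ) = 2 * π / 3 * k + 2 * π / 3 by push_cast; ring] at hj'
  set μ := 2 * π / 3 * k
  obtain ⟨sx, hsx⟩ := hj x (abs_le.2 ⟨by linarith, by linarith⟩)
  by_cases hy : y ≤ μ + π / 3
  · obtain ⟨sy, hsy⟩ := hj y (abs_le.2 ⟨by linarith, by linarith⟩)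
    refine ⟨sx, sy, ?_⟩
    have hD : kasnerSelect v sx x - kasnerSelect v sy y =
        kasnerBaseMap (kasnerSlope v) (x - μ) - kasnerBaseMap (kasnerSlope v) (y - μ) := by
      rw [hsx, hsy]; ring
    obtain ⟨hlow, hup⟩ := kasnerBaseMap_sub_mem_Icc_of_sector hv (by linarith : -(π / 3) ≤ x - μ)
      (by linarith : x - μ ≤ y - μ) (by linarith)
    rw [sub_sub_sub_cancel_right, ← hD] at hlow hup
    rw [← Real.Angle.coe_sub]
    by_cases hfar : kasnerDelta v ≤ kasnerSelect v sx x - kasnerSelect v sy y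
    · exact Or.inl (le_norm_coe_angle hδ₀.le hfar (by linarith))
    · exact Or.inr ⟨hlow, not_le.1 hfar⟩
  · obtain ⟨sy, hsy⟩ := hj' y (abs_le.2 ⟨by linarith, by linarith⟩)
    refine ⟨sx, sy, Or.inl ?_⟩
    have hr := kasnerBaseMap_sub_add_mem_Icc hv (u := x - μ) (w := y - (μ + 2 * π / 3))
      ⟨by linarith, by linarith⟩ ⟨by linarith, by linarith⟩
    set r := kasnerBaseMap (kasnerSlope v) (y - (μ + 2 * π / 3)) -
      kasnerBaseMap (kasnerSlope v) (x - μ) + 2 * π / 3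
    have hmod : (kasnerSelect v sx x : Real.Angle) - kasnerSelect v sy y =
        ((-r : ℝ) : Real.Angle) := by
      rw [← Real.Angle.coe_sub, Real.Angle.angle_eq_iff_two_pi_dvd_sub]
      exact ⟨j' - j, by rw [hsx, hsy]; push_cast; ring⟩
    rw [hmod, Real.Angle.coe_neg, norm_neg]
    exact le_norm_coe_angle hδ₀.le hr.1 hr.2

theorem kasnerIter_cons (v : ℝ) (s : KasnerSymbol) (ω : ℕ → KasnerSymbol) (n : ℕ) (φ : ℝ) :
    kasnerIter v (Stream'.cons s ω) (n + 1) φ = kasnerIter v ω n (kasnerSelect v s φ) := by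
  induction n with
  | zero => rfl
  | succ n ih => exact congrArg (kasnerSelect v (ω n)) ih

theorem exists_kasnerIter_far {v : ℝ} (hv : v ∈ Set.Ioo 0 (1 / 2)) (N : ℕ) {x y : ℝ}
    (hxy : x < y) (hyx : y - x < kasnerDelta v) (hN : kasnerDelta v ≤ kasnerRate v ^ N * (y - x)) :
    ∃ (n : ℕ) (ω ω' : ℕ → KasnerSymbol),
      kasnerDelta v ≤ ‖(kasnerIter v ω n x : Real.Angle) - kasnerIter v ω' n y‖ := by
  induction N generalizing x y with
  | zero => rw [pow_zero, one_mul] at hN; linarith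
  | succ N ih =>
    obtain ⟨s, s', hfar | ⟨hexp, hclose⟩⟩ := exists_kasnerSelect_far_or_expanding hv hxy hyx
    · exact ⟨1, fun _ => s, fun _ => s', hfar⟩
    · have hrate := (one_lt_kasnerRate hv).le
      obtain ⟨n, ω, ω', h⟩ := ih (by nlinarith) hclose (by
        calc kasnerDelta v ≤ kasnerRate v ^ N * (kasnerRate v * (y - x)) := by
              rw [← mul_assoc, ← pow_succ]; exact hN
          _ ≤ _ := mul_le_mul_of_nonneg_left hexp (by positivity))
      refine ⟨n + 1, Stream'.cons s ω', Stream'.cons s' ω, ?_⟩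
      rwa [kasnerIter_cons, kasnerIter_cons, ← norm_neg, neg_sub]

/-- For `v ∈ (0, 1/2)`, the multi-valued Kasner map realizes sensitivity to
initial conditions with sensitivity constant `δ = |𝐀|/3 = 2 arccos v - 2π/3`: for every point
`p` on the Kasner circle and every open neighborhood `U` of `p` there exist `q ∈ U \ {p}`,
`n ∈ ℕ` and symbol sequences `ω, ω*` with `d(K_ω^n(p), K_{ω*}^n(q)) ≥ δ`, where distance is
measured on the circle `ℝ/2πℤ`. -/
theorem kasner_map_sensitivity (v : ℝ) (hv : v ∈ Set.Ioo (0:ℝ) (1/2)) :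
    0 < 2 * Real.arccos v - 2*π/3 ∧
    ∀ (p : ℝ) (U : Set ℝ), IsOpen U → p ∈ U →
      ∃ q ∈ U, q ≠ p ∧ ∃ (n : ℕ) (ω ωs : ℕ → KasnerSymbol),
        2 * Real.arccos v - 2*π/3
          ≤ ‖((kasnerIter v ω n p : ℝ) - (kasnerIter v ωs n q : ℝ) : Real.Angle)‖ := by
  have hδ : 0 < kasnerDelta v := kasnerDelta_pos (by linarith [hv.1]) hv.2
  refine ⟨hδ, fun p U hU hp => ?_⟩
  obtain ⟨ε, hε, hball⟩ := Metric.isOpen_iff.1 hU p hp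
  set t := min (ε / 2) (kasnerDelta v / 2)
  have ht : 0 < t := lt_min (by linarith) (by linarith)
  have htε : t < ε := (min_le_left _ _).trans_lt (by linarith)
  have htδ : t < kasnerDelta v := (min_le_right _ _).trans_lt (by linarith)
  obtain ⟨N, hN⟩ := pow_unbounded_of_one_lt (kasnerDelta v / t) (one_lt_kasnerRate hv)
  rw [div_lt_iff₀ ht] at hN
  refine ⟨p + t, hball ?_, by linarith, exists_kasnerIter_far hv N (by linarith) ?_ ?_⟩
  · rw [Metric.mem_ball, Real.dist_eq, add_sub_cancel_left, abs_of_pos ht]; exact htε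
  · rwa [add_sub_cancel_left]
  · rw [add_sub_cancel_left]; exact hN.le
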